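/- arXiv:2207.10097 — 7 statements merged into one kernel-verified Lean document; each statement's English description precedes it below -/
import Mathlib

section
/- Let E be a nonzero finite-dimensional complex inner product space, let H₁ and H₂ be self-adjoint operators on E, and let S be a nonzero subspace of E such that H₂ x = 0 for every x ∈ S and ⟨x, H₂ x⟩ ≥ J‖x‖² for every x in the orthogonal complement of S, where J > 2‖H₁‖. Then λ₀(H₁|_S) − ‖H₁‖²/(J − 2‖H₁‖) ≤ λ₀(H₁ + H₂) ≤ λ₀(H₁|_S). -/
/-!
Split a unit vector as `x = u + v` with `u ∈ S`, `v ∈ Sᗮ`. Since `H₂` is self-adjoint and kills `u`,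
it only sees `v` and contributes at least `J‖v‖²`; `H₁` contributes at least `λ₀(H₁|_S) ‖u‖²` up to
cross and `v`-terms of size at most `2‖H₁‖‖v‖ + ‖H₁‖‖v‖²`. Using `‖u‖² = 1 - ‖v‖²` and
`λ₀(H₁|_S) ≤ ‖H₁‖`, the loss is the quadratic `(J - 2‖H₁‖)‖v‖² - 2‖H₁‖‖v‖`, whose minimum is
`-‖H₁‖² / (J - 2‖H₁‖)`. The upper bound is the variational principle with test vectors in `S`.
-/

/-- The smallest eigenvalue of a self-adjoint operator `A` on a nonzero
finite-dimensional complex inner product space, expressed as the infimum of the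
Rayleigh quotient over unit vectors. -/
noncomputable def groundEnergy {E : Type*} [NormedAddCommGroup E] [InnerProductSpace ℂ E]
    (A : E →L[ℂ] E) : ℝ :=
  ⨅ x : {x : E // ‖x‖ = 1}, (inner ℂ (x : E) (A (x : E)) : ℂ).re

/-- The infimum of the Rayleigh quotient of `A` over unit vectors lying in the
subspace `S`, i.e. the smallest eigenvalue of the restriction `A|_S`. -/
noncomputable def groundEnergyOn {E : Type*} [NormedAddCommGroup E] [InnerProductSpace ℂ E]
    (A : E →L[ℂ] E) (S : Submodule ℂ E) : ℝ :=
  ⨅ x : {x : E // x ∈ S ∧ ‖x‖ = 1}, (inner ℂ (x : E) (A (x : E)) : ℂ).re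

lemma neg_sq_div_le_mul_sq_sub {D : ℝ} (hD : 0 < D) (K b : ℝ) :
    -(K ^ 2 / D) ≤ D * b ^ 2 - 2 * K * b := by
  have hsq : D * b ^ 2 - 2 * K * b + K ^ 2 / D = (D * b - K) ^ 2 / D := by
    field_simp
    ring
  linarith [div_nonneg (sq_nonneg (D * b - K)) hD.le]

section GroundEnergy

variable {E : Type*} [NormedAddCommGroup E] [InnerProductSpace ℂ E]

lemma abs_re_inner_apply_le (A : E →L[ℂ] E) (u v : E) :
    |(inner ℂ u (A v)).re| ≤ ‖A‖ * ‖u‖ * ‖v‖ :=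
  calc |(inner ℂ u (A v)).re| ≤ ‖inner ℂ u (A v)‖ := Complex.abs_re_le_norm _
    _ ≤ ‖u‖ * ‖A v‖ := norm_inner_le_norm _ _
    _ ≤ ‖u‖ * (‖A‖ * ‖v‖) := by gcongr; exact A.le_opNorm v
    _ = ‖A‖ * ‖u‖ * ‖v‖ := by ring

lemma re_inner_smul_apply_smul (A : E →L[ℂ] E) (c : ℂ) (x : E) :
    (inner ℂ (c • x) (A (c • x))).re = ‖c‖ ^ 2 * (inner ℂ x (A x)).re := by
  rw [map_smul, inner_smul_left, inner_smul_right, ← mul_assoc, Complex.conj_mul',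
    ← Complex.ofReal_pow, Complex.re_ofReal_mul]

lemma sub_le_re_inner_add_apply_add (A : E →L[ℂ] E) (u v : E) :
    (inner ℂ u (A u)).re - 2 * ‖A‖ * ‖u‖ * ‖v‖ - ‖A‖ * ‖v‖ ^ 2 ≤
      (inner ℂ (u + v) (A (u + v))).re := by
  have huv := neg_le_of_abs_le (abs_re_inner_apply_le A u v)
  have hvu := neg_le_of_abs_le (abs_re_inner_apply_le A v u)
  have hvv := neg_le_of_abs_le (abs_re_inner_apply_le A v v)
  simp only [map_add, inner_add_left, inner_add_right, Complex.add_re]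
  linarith

lemma inner_add_apply_add_of_apply_eq_zero [CompleteSpace E] {B : E →L[ℂ] E}
    (hB : IsSelfAdjoint B) {u : E} (hu : B u = 0) (v : E) :
    inner ℂ (u + v) (B (u + v)) = inner ℂ v (B v) := by
  have hcross : inner ℂ u (B v) = 0 := by
    rw [← ContinuousLinearMap.coe_coe, ← hB.isSymmetric u v, ContinuousLinearMap.coe_coe, hu,
      inner_zero_left]
  simp [hu, hcross]

lemma exists_mem_norm_eq_one {S : Submodule ℂ E} (hS : S ≠ ⊥) : ∃ x ∈ S, ‖x‖ = 1 := by
  obtain ⟨y, hyS, hy⟩ := Submodule.exists_mem_ne_zero_of_ne_bot hS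
  exact ⟨_, S.smul_mem _ hyS, norm_smul_inv_norm (𝕜 := ℂ) hy⟩

lemma bddBelow_re_inner_apply (A : E →L[ℂ] E) (S : Submodule ℂ E) :
    BddBelow (Set.range fun x : {x : E // x ∈ S ∧ ‖x‖ = 1} => (inner ℂ (x : E) (A x)).re) := by
  refine ⟨-‖A‖, ?_⟩
  rintro _ ⟨⟨x, -, hx⟩, rfl⟩
  simpa [hx] using neg_le_of_abs_le (abs_re_inner_apply_le A x x)

lemma groundEnergyOn_le_re_inner (A : E →L[ℂ] E) {S : Submodule ℂ E} {x : E} (hxS : x ∈ S)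
    (hx : ‖x‖ = 1) : groundEnergyOn A S ≤ (inner ℂ x (A x)).re :=
  ciInf_le (bddBelow_re_inner_apply A S) ⟨x, hxS, hx⟩

lemma le_groundEnergyOn {A : E →L[ℂ] E} {S : Submodule ℂ E} (hS : S ≠ ⊥) {c : ℝ}
    (h : ∀ x ∈ S, ‖x‖ = 1 → c ≤ (inner ℂ x (A x)).re) : c ≤ groundEnergyOn A S := by
  obtain ⟨x, hxS, hx⟩ := exists_mem_norm_eq_one hS
  have : Nonempty {x : E // x ∈ S ∧ ‖x‖ = 1} := ⟨⟨x, hxS, hx⟩⟩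
  exact le_ciInf fun x => h x.1 x.2.1 x.2.2

lemma groundEnergyOn_le_opNorm (A : E →L[ℂ] E) {S : Submodule ℂ E} (hS : S ≠ ⊥) :
    groundEnergyOn A S ≤ ‖A‖ := by
  obtain ⟨x, hxS, hx⟩ := exists_mem_norm_eq_one hS
  refine (groundEnergyOn_le_re_inner A hxS hx).trans ?_
  simpa [hx] using le_of_abs_le (abs_re_inner_apply_le A x x)

lemma groundEnergyOn_mul_norm_sq_le (A : E →L[ℂ] E) {S : Submodule ℂ E} {x : E} (hxS : x ∈ S) :
    groundEnergyOn A S * ‖x‖ ^ 2 ≤ (inner ℂ x (A x)).re := by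
  rcases eq_or_ne x 0 with rfl | hx
  · simp
  have h := groundEnergyOn_le_re_inner A (S.smul_mem (‖x‖⁻¹ : ℂ) hxS) (norm_smul_inv_norm hx)
  rwa [re_inner_smul_apply_smul, norm_inv, Complex.norm_real, norm_norm, inv_pow,
    inv_mul_eq_div, le_div_iff₀ (by positivity)] at h

lemma groundEnergyOn_top (A : E →L[ℂ] E) : groundEnergyOn A ⊤ = groundEnergy A :=
  (Equiv.subtypeEquivRight fun x => by simp).iInf_congr fun _ => rfl

lemma groundEnergy_le_groundEnergyOn (A : E →L[ℂ] E) {S : Submodule ℂ E} (hS : S ≠ ⊥) :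
    groundEnergy A ≤ groundEnergyOn A S := by
  rw [← groundEnergyOn_top]
  exact le_groundEnergyOn hS fun x _ hx => groundEnergyOn_le_re_inner A trivial hx

lemma groundEnergyOn_add_of_forall_mem_eq_zero (A : E →L[ℂ] E) {B : E →L[ℂ] E}
    {S : Submodule ℂ E} (hB : ∀ x ∈ S, B x = 0) : groundEnergyOn (A + B) S = groundEnergyOn A S :=
  iInf_congr fun x => by simp [hB x.1 x.2.1]

theorem groundEnergyOn_sub_le_re_inner_add [CompleteSpace E] {A B : E →L[ℂ] E}
    (hB : IsSelfAdjoint B) {S : Submodule ℂ E} [S.HasOrthogonalProjection] (hS : S ≠ ⊥)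
    (hker : ∀ x ∈ S, B x = 0)
    {J : ℝ} (hJ : 2 * ‖A‖ < J) (hgap : ∀ x ∈ Sᗮ, J * ‖x‖ ^ 2 ≤ (inner ℂ x (B x)).re)
    {x : E} (hx : ‖x‖ = 1) :
    groundEnergyOn A S - ‖A‖ ^ 2 / (J - 2 * ‖A‖) ≤ (inner ℂ x ((A + B) x)).re := by
  obtain ⟨u, huS, v, hvS, rfl⟩ := S.exists_add_mem_mem_orthogonal x
  have hpyth : ‖u‖ ^ 2 + ‖v‖ ^ 2 = 1 := by
    have := norm_add_sq_eq_norm_sq_add_norm_sq_of_inner_eq_zero u v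
      (S.inner_right_of_mem_orthogonal huS hvS)
    rw [hx] at this
    linarith
  have hu : ‖u‖ ≤ 1 := by nlinarith [norm_nonneg u, norm_nonneg v]
  rw [add_apply, inner_add_right, Complex.add_re,
    inner_add_apply_add_of_apply_eq_zero hB (hker u huS)]
  have hA := sub_le_re_inner_add_apply_add A u v
  have hlu := groundEnergyOn_mul_norm_sq_le A huS
  rw [show ‖u‖ ^ 2 = 1 - ‖v‖ ^ 2 by linarith, mul_sub, mul_one] at hlu
  have hlv := mul_le_mul_of_nonneg_right (groundEnergyOn_le_opNorm A hS) (sq_nonneg ‖v‖)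
  have huv := mul_le_mul_of_nonneg_right hu (mul_nonneg (norm_nonneg A) (norm_nonneg v))
  have hq := neg_sq_div_le_mul_sq_sub (sub_pos.2 hJ) ‖A‖ ‖v‖
  have hgv := hgap v hvS
  linarith

end GroundEnergy

theorem projection_lemma_general
    {E : Type*} [NormedAddCommGroup E] [InnerProductSpace ℂ E]
    [FiniteDimensional ℂ E]
    (H₁ H₂ : E →L[ℂ] E) (hH₂ : IsSelfAdjoint H₂)
    (S : Submodule ℂ E) (hS : S ≠ ⊥)
    (hker : ∀ x ∈ S, H₂ x = 0)
    (J : ℝ) (hJ : J > 2 * ‖H₁‖)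
    (hgap : ∀ x ∈ Sᗮ, J * ‖x‖ ^ 2 ≤ (inner ℂ x (H₂ x) : ℂ).re) :
    groundEnergyOn H₁ S - ‖H₁‖ ^ 2 / (J - 2 * ‖H₁‖) ≤ groundEnergy (H₁ + H₂) ∧
      groundEnergy (H₁ + H₂) ≤ groundEnergyOn H₁ S := by
  refine ⟨?_, ?_⟩
  · rw [← groundEnergyOn_top]
    exact le_groundEnergyOn (ne_bot_of_le_ne_bot hS le_top) fun x _ hx =>
      groundEnergyOn_sub_le_re_inner_add hH₂ hS hker hJ hgap hx
  · calc groundEnergy (H₁ + H₂) ≤ groundEnergyOn (H₁ + H₂) S :=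
          groundEnergy_le_groundEnergyOn _ hS
      _ = groundEnergyOn H₁ S := groundEnergyOn_add_of_forall_mem_eq_zero H₁ hker

/-- The projection lemma (Lemma 1 of Kempe–Kitaev–Regev). -/
theorem projection_lemma
    {E : Type*} [NormedAddCommGroup E] [InnerProductSpace ℂ E]
    [FiniteDimensional ℂ E] [Nontrivial E]
    (H₁ H₂ : E →L[ℂ] E) (hH₁ : IsSelfAdjoint H₁) (hH₂ : IsSelfAdjoint H₂)
    (S : Submodule ℂ E) (hS : S ≠ ⊥)
    (hker : ∀ x ∈ S, H₂ x = 0)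
    (J : ℝ) (hJ : J > 2 * ‖H₁‖)
    (hgap : ∀ x ∈ Sᗮ, J * ‖x‖ ^ 2 ≤ (inner ℂ x (H₂ x) : ℂ).re) :
    groundEnergyOn H₁ S - ‖H₁‖ ^ 2 / (J - 2 * ‖H₁‖) ≤ groundEnergy (H₁ + H₂) ∧
      groundEnergy (H₁ + H₂) ≤ groundEnergyOn H₁ S :=
  projection_lemma_general H₁ H₂ hH₂ S hS hker J hJ hgap
end

section
/- Let E be a finite-dimensional complex inner product space, let H₁ and H₂ be self-adjoint operators on E with H₂ positive semi-definite, let η ∈ E be a unit vector with H₁ η = 0, and let Δ > 0 be such that ⟨x, H₁ x⟩ ≥ Δ‖x‖² for every vector x orthogonal to η. Set H := H₁ + H₂ and assume ⟨η, H η⟩ ≤ 1. Then every unit eigenvector φ of H corresponding to the smallest eigenvalue of H satisfies |⟨φ, η⟩|² ≥ 1 − 1/Δ. -/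
/-!
Write `φ = ⟪η, φ⟫ • η + x` with `x ⟂ η`. Since `H₁ η = 0`, the energy of `φ` under `H₁` is that of
`x`, so the gap gives `Δ ‖x‖² ≤ ⟪φ, H₁ φ⟫ ≤ ⟪φ, H φ⟫ = μ`, and `μ ≤ ⟪η, H η⟫ ≤ 1` because the least
eigenvalue of a self-adjoint operator is the infimum of its Rayleigh quotient. Hence
`‖x‖² ≤ 1/Δ`, and Pythagoras gives `|⟪φ, η⟫|² = 1 - ‖x‖² ≥ 1 - 1/Δ`.
-/

section

open RCLike

variable {𝕜 : Type*} [RCLike 𝕜] {E : Type*} [NormedAddCommGroup E] [InnerProductSpace 𝕜 E]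

local notation "⟪" x ", " y "⟫" => inner 𝕜 x y

theorem inner_sub_inner_smul_eq_zero {η : E} (hη : ‖η‖ = 1) (φ : E) :
    ⟪η, φ - ⟪η, φ⟫ • η⟫ = 0 := by
  rw [inner_sub_right, inner_smul_right, inner_self_eq_one_of_norm_eq_one hη, mul_one, sub_self]

theorem norm_sq_eq_norm_inner_sq_add_norm_sub_inner_smul_sq {η : E} (hη : ‖η‖ = 1) (φ : E) :
    ‖φ‖ ^ 2 = ‖⟪η, φ⟫‖ ^ 2 + ‖φ - ⟪η, φ⟫ • η‖ ^ 2 := by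
  have horth : ⟪⟪η, φ⟫ • η, φ - ⟪η, φ⟫ • η⟫ = 0 := by
    rw [inner_smul_left, inner_sub_inner_smul_eq_zero hη, mul_zero]
  have := norm_add_sq_eq_norm_sq_add_norm_sq_of_inner_eq_zero _ _ horth
  rw [add_sub_cancel, norm_smul, hη, mul_one] at this
  simpa only [sq] using this

theorem LinearMap.IsSymmetric.inner_sub_smul_map_sub_smul {A : E →ₗ[𝕜] E} (hA : A.IsSymmetric)
    {η : E} (hη : A η = 0) (x : E) (c : 𝕜) :
    ⟪x - c • η, A (x - c • η)⟫ = ⟪x, A x⟫ := by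
  have hηx : ⟪η, A x⟫ = 0 := by rw [← hA η x, hη, inner_zero_left]
  rw [map_sub, map_smul, hη, smul_zero, sub_zero, inner_sub_left, inner_smul_left, hηx, mul_zero,
    sub_zero]

theorem re_inner_map_self_eq_of_eigenvector {T : E →L[𝕜] E} {φ : E} (hφ : ‖φ‖ = 1) {μ : ℝ}
    (heig : T φ = (μ : 𝕜) • φ) : re ⟪φ, T φ⟫ = μ := by
  rw [heig, inner_smul_right, inner_self_eq_one_of_norm_eq_one hφ, mul_one, ofReal_re]

theorem le_re_inner_map_self_of_forall_le_eigenvalue [FiniteDimensional 𝕜 E] {T : E →L[𝕜] E}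
    (hT : (T : E →ₗ[𝕜] E).IsSymmetric) {μ : ℝ}
    (hμ : ∀ (ν : ℝ) (x : E), x ≠ 0 → T x = (ν : 𝕜) • x → μ ≤ ν) {x : E} (hx : ‖x‖ = 1) :
    μ ≤ re ⟪x, T x⟫ := by
  have hx0 : x ≠ 0 := norm_ne_zero_iff.mp (hx ▸ one_ne_zero)
  have : Nontrivial E := ⟨x, 0, hx0⟩
  obtain ⟨v, hv⟩ := hT.hasEigenvalue_iInf_of_finiteDimensional.exists_hasEigenvector
  have hbdd : BddBelow (Set.range fun y : { y : E // y ≠ 0 } => T.rayleighQuotient y) :=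
    ⟨-‖T‖, by rintro _ ⟨y, rfl⟩; exact (abs_le.mp (T.rayleighQuotient_le_norm y)).1⟩
  calc μ ≤ ⨅ y : { y : E // y ≠ 0 }, T.rayleighQuotient y := hμ _ v hv.2 hv.apply_eq_smul
    _ ≤ T.rayleighQuotient x := ciInf_le hbdd ⟨x, hx0⟩
    _ = re ⟪x, T x⟫ := by
      rw [ContinuousLinearMap.rayleighQuotient, ContinuousLinearMap.reApplyInnerSelf_apply, hx,
        one_pow, div_one, inner_re_symm]

theorem one_sub_div_le_norm_inner_sq {A : E →ₗ[𝕜] E} (hA : A.IsSymmetric) {η φ : E}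
    (hη : ‖η‖ = 1) (hφ : ‖φ‖ = 1) (hker : A η = 0) {Δ : ℝ} (hΔ : 0 < Δ)
    (hgap : ∀ x : E, ⟪η, x⟫ = 0 → Δ * ‖x‖ ^ 2 ≤ re ⟪x, A x⟫) {ε : ℝ}
    (hφA : re ⟪φ, A φ⟫ ≤ ε) :
    1 - ε / Δ ≤ ‖⟪φ, η⟫‖ ^ 2 := by
  set x := φ - ⟪η, φ⟫ • η
  have henergy : Δ * ‖x‖ ^ 2 ≤ ε :=
    calc Δ * ‖x‖ ^ 2 ≤ re ⟪x, A x⟫ := hgap x (inner_sub_inner_smul_eq_zero hη φ)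
      _ = re ⟪φ, A φ⟫ := by rw [hA.inner_sub_smul_map_sub_smul hker φ]
      _ ≤ ε := hφA
  have hx : ‖x‖ ^ 2 ≤ ε / Δ := by rw [le_div_iff₀ hΔ]; linarith
  have hpyth := norm_sq_eq_norm_inner_sq_add_norm_sub_inner_smul_sq (𝕜 := 𝕜) hη φ
  rw [hφ, one_pow] at hpyth
  rw [norm_inner_symm (𝕜 := 𝕜)]
  linarith

end

/-- The history state `η` (the unique null vector of the gap-amplified part `H₁`,
with energy penalty `Δ` on its orthogonal complement) has fidelity at least
`1 − 1/Δ` with any ground state `φ` of `H = H₁ + H₂`. -/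
theorem history_state_fidelity
    {E : Type*} [NormedAddCommGroup E] [InnerProductSpace ℂ E] [FiniteDimensional ℂ E]
    (H₁ H₂ : E →L[ℂ] E) (h₁ : IsSelfAdjoint H₁) (h₂ : IsSelfAdjoint H₂)
    (hpsd : ∀ x : E, 0 ≤ (inner ℂ x (H₂ x) : ℂ).re)
    (η : E) (hη : ‖η‖ = 1) (hker : H₁ η = 0)
    (Δ : ℝ) (hΔ : 0 < Δ)
    (hgap : ∀ x : E, (inner ℂ η x : ℂ) = 0 → Δ * ‖x‖ ^ 2 ≤ (inner ℂ x (H₁ x) : ℂ).re)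
    (hE : ((inner ℂ η ((H₁ + H₂) η) : ℂ)).re ≤ 1)
    (φ : E) (hφ : ‖φ‖ = 1) (μ : ℝ) (heig : (H₁ + H₂) φ = (μ : ℂ) • φ)
    (hmin : ∀ (ν : ℝ) (x : E), x ≠ 0 → (H₁ + H₂) x = (ν : ℂ) • x → μ ≤ ν) :
    1 - 1 / Δ ≤ ‖(inner ℂ φ η : ℂ)‖ ^ 2 := by
  have hμ : μ ≤ 1 :=
    (le_re_inner_map_self_of_forall_le_eigenvalue (h₁.add h₂).isSymmetric hmin hη).trans hE
  have hφH₁ : (inner ℂ φ (H₁ φ) : ℂ).re ≤ 1 := by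
    have hφH := re_inner_map_self_eq_of_eigenvector hφ heig
    rw [add_apply, inner_add_right, map_add, RCLike.re_to_complex, RCLike.re_to_complex] at hφH
    linarith [hpsd φ]
  exact one_sub_div_le_norm_inner_sq h₁.isSymmetric hη hφ hker hΔ hgap hφH₁
end

section
/- Let E be a complex inner product space of dimension at least 2, let H₁ and H₂ be self-adjoint operators on E with H₂ positive semi-definite, let η ∈ E be a unit vector with H₁ η = 0, and let Δ > 0 be such that ⟨x, H₁ x⟩ ≥ Δ‖x‖² for every vector x orthogonal to η. Set H := H₁ + H₂ and assume ⟨η, H η⟩ ≤ 1. Let λ₀(H) ≤ λ₁(H) be the two smallest eigenvalues of H (counted with multiplicity), with corresponding orthonormal eigenvectors φ₀ and φ₁. Then λ₁(H) ≥ Δ − 1, and the spectral gap satisfies λ₁(H) − λ₀(H) ≥ Δ − 2. -/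
/-!
The plane spanned by the eigenvectors `φ0`, `φ1` contains a nonzero vector `x ⟂ η`. On that
plane `H` is bounded above by `λ₁`, while on `η⟂` it is bounded below by `H₁`, hence by `Δ`;
so `Δ ≤ λ₁`. Testing `H` on `η` gives `λ₀ ≤ ⟨η, H η⟩ ≤ 1`.
-/

open scoped InnerProductSpace

section Eigen

variable {𝕜 E : Type*} [RCLike 𝕜] [NormedAddCommGroup E] [InnerProductSpace 𝕜 E]

theorem re_inner_add_apply_add_of_eigen {T : E →L[𝕜] E} {u v : E} {μ ν : ℝ}
    (huμ : T u = (μ : 𝕜) • u) (hvν : T v = (ν : 𝕜) • v) (huv : ⟪u, v⟫_𝕜 = 0) :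
    RCLike.re ⟪u + v, T (u + v)⟫_𝕜 = μ * ‖u‖ ^ 2 + ν * ‖v‖ ^ 2 := by
  have hvu : ⟪v, u⟫_𝕜 = 0 := inner_eq_zero_symm.mp huv
  simp only [map_add, huμ, hvν, inner_add_left, inner_add_right, inner_smul_right, huv, hvu,
    inner_self_eq_norm_sq_to_K, add_zero, zero_add]
  simp only [← RCLike.ofReal_pow, ← RCLike.ofReal_mul, RCLike.ofReal_re]

theorem re_inner_add_apply_add_le_of_eigen {T : E →L[𝕜] E} {u v : E} {μ ν : ℝ}
    (huμ : T u = (μ : 𝕜) • u) (hvν : T v = (ν : 𝕜) • v) (huv : ⟪u, v⟫_𝕜 = 0) (hμν : μ ≤ ν) :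
    RCLike.re ⟪u + v, T (u + v)⟫_𝕜 ≤ ν * ‖u + v‖ ^ 2 := by
  have hpyth : ‖u + v‖ ^ 2 = ‖u‖ ^ 2 + ‖v‖ ^ 2 := by
    simpa only [sq] using norm_add_sq_eq_norm_sq_add_norm_sq_of_inner_eq_zero u v huv
  rw [re_inner_add_apply_add_of_eigen huμ hvν huv, hpyth]
  nlinarith [sq_nonneg ‖u‖]

theorem exists_smul_add_smul_ne_zero_inner_eq_zero (η : E) {u v : E} (hu : u ≠ 0) (hv : v ≠ 0)
    (huv : ⟪u, v⟫_𝕜 = 0) : ∃ a b : 𝕜, a • u + b • v ≠ 0 ∧ ⟪η, a • u + b • v⟫_𝕜 = 0 := by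
  by_cases hηu : ⟪η, u⟫_𝕜 = 0
  · exact ⟨1, 0, by simpa using hu, by simpa using hηu⟩
  refine ⟨⟪η, v⟫_𝕜, -⟪η, u⟫_𝕜, fun hx => ?_, ?_⟩
  · -- pairing with `v` kills the `u`-component and leaves `-⟪η, u⟫ ‖v‖²`
    have := congrArg (⟪v, ·⟫_𝕜) hx
    simp only [inner_add_right, inner_smul_right, inner_eq_zero_symm.mp huv, inner_zero_right,
      mul_zero, zero_add, neg_mul, neg_eq_zero, mul_eq_zero, inner_self_eq_zero] at this
    tauto
  · simp only [inner_add_right, inner_smul_right]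
    ring

theorem le_eigenvalue_of_le_re_inner_of_inner_eq_zero {T : E →L[𝕜] E} {u v η : E} {μ ν Δ : ℝ}
    (hu : u ≠ 0) (hv : v ≠ 0) (huμ : T u = (μ : 𝕜) • u) (hvν : T v = (ν : 𝕜) • v)
    (huv : ⟪u, v⟫_𝕜 = 0) (hμν : μ ≤ ν)
    (hgap : ∀ x, ⟪η, x⟫_𝕜 = 0 → Δ * ‖x‖ ^ 2 ≤ RCLike.re ⟪x, T x⟫_𝕜) : Δ ≤ ν := by
  obtain ⟨a, b, hx, hηx⟩ := exists_smul_add_smul_ne_zero_inner_eq_zero η hu hv huv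
  have hupper := re_inner_add_apply_add_le_of_eigen (T := T) (u := a • u) (v := b • v)
    (by rw [map_smul, huμ, smul_comm]) (by rw [map_smul, hvν, smul_comm])
    (by simp [inner_smul_left, inner_smul_right, huv]) hμν
  have hpos : 0 < ‖a • u + b • v‖ ^ 2 := by positivity
  nlinarith [hgap _ hηx]

end Eigen

theorem spectral_gap_lower_bound_general
    {E : Type*} [NormedAddCommGroup E] [InnerProductSpace ℂ E]
    (H₁ H₂ : E →L[ℂ] E)
    (hpsd : ∀ x : E, 0 ≤ (inner ℂ x (H₂ x) : ℂ).re)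
    (η : E) (hη : ‖η‖ = 1)
    (Δ : ℝ)
    (hgap : ∀ x : E, (inner ℂ η x : ℂ) = 0 → Δ * ‖x‖ ^ 2 ≤ (inner ℂ x (H₁ x) : ℂ).re)
    (hE : ((inner ℂ η ((H₁ + H₂) η) : ℂ)).re ≤ 1)
    -- `lam0 ≤ lam1` are the two smallest eigenvalues of `H = H₁ + H₂`
    -- (counted with multiplicity), with orthonormal eigenvectors `φ0`, `φ1`:
    (lam0 lam1 : ℝ) (hle : lam0 ≤ lam1)
    (φ0 φ1 : E) (hφ0 : ‖φ0‖ = 1) (hφ1 : ‖φ1‖ = 1) (horth : (inner ℂ φ0 φ1 : ℂ) = 0)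
    (heig0 : (H₁ + H₂) φ0 = (lam0 : ℂ) • φ0) (heig1 : (H₁ + H₂) φ1 = (lam1 : ℂ) • φ1)
    (hmin0 : ∀ x : E, ‖x‖ = 1 → lam0 ≤ (inner ℂ x ((H₁ + H₂) x) : ℂ).re) :
    Δ - 1 ≤ lam1 ∧ Δ - 2 ≤ lam1 - lam0 := by
  have hgapH : ∀ x : E, ⟪η, x⟫_ℂ = 0 → Δ * ‖x‖ ^ 2 ≤ (⟪x, (H₁ + H₂) x⟫_ℂ).re := fun x hx => by
    have hsplit : (⟪x, (H₁ + H₂) x⟫_ℂ).re = (⟪x, H₁ x⟫_ℂ).re + (⟪x, H₂ x⟫_ℂ).re := by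
      simp only [add_apply, inner_add_right, Complex.add_re]
    linarith [hgap x hx, hpsd x]
  have hΔ : Δ ≤ lam1 :=
    le_eigenvalue_of_le_re_inner_of_inner_eq_zero (norm_ne_zero_iff.mp (hφ0 ▸ one_ne_zero))
      (norm_ne_zero_iff.mp (hφ1 ▸ one_ne_zero)) heig0 heig1 horth hle hgapH
  have hlam0 : lam0 ≤ 1 := (hmin0 η hη).trans hE
  constructor <;> linarith

/-- Spectral gap of the gap-amplified clock Hamiltonian `H = H₁ + H₂`: if `η` is a
unit null vector of `H₁`, `H₁` penalizes the orthogonal complement of `η` by `Δ`,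
`H₂` is positive semi-definite, and `⟨η, H η⟩ ≤ 1`, then the second smallest
eigenvalue `λ₁(H)` satisfies `λ₁(H) ≥ Δ − 1` and the spectral gap satisfies
`λ₁(H) − λ₀(H) ≥ Δ − 2`. -/
theorem spectral_gap_lower_bound
    {E : Type*} [NormedAddCommGroup E] [InnerProductSpace ℂ E] [FiniteDimensional ℂ E]
    (hdim : 2 ≤ Module.finrank ℂ E)
    (H₁ H₂ : E →L[ℂ] E) (h₁ : IsSelfAdjoint H₁) (h₂ : IsSelfAdjoint H₂)
    (hpsd : ∀ x : E, 0 ≤ (inner ℂ x (H₂ x) : ℂ).re)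
    (η : E) (hη : ‖η‖ = 1) (hker : H₁ η = 0)
    (Δ : ℝ) (hΔ : 0 < Δ)
    (hgap : ∀ x : E, (inner ℂ η x : ℂ) = 0 → Δ * ‖x‖ ^ 2 ≤ (inner ℂ x (H₁ x) : ℂ).re)
    (hE : ((inner ℂ η ((H₁ + H₂) η) : ℂ)).re ≤ 1)
    -- `lam0 ≤ lam1` are the two smallest eigenvalues of `H = H₁ + H₂`
    -- (counted with multiplicity), with orthonormal eigenvectors `φ0`, `φ1`:
    (lam0 lam1 : ℝ) (hle : lam0 ≤ lam1)
    (φ0 φ1 : E) (hφ0 : ‖φ0‖ = 1) (hφ1 : ‖φ1‖ = 1) (horth : (inner ℂ φ0 φ1 : ℂ) = 0)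
    (heig0 : (H₁ + H₂) φ0 = (lam0 : ℂ) • φ0) (heig1 : (H₁ + H₂) φ1 = (lam1 : ℂ) • φ1)
    (hmin0 : ∀ x : E, ‖x‖ = 1 → lam0 ≤ (inner ℂ x ((H₁ + H₂) x) : ℂ).re)
    (hmin1 : ∀ x : E, ‖x‖ = 1 → (inner ℂ φ0 x : ℂ) = 0 →
      lam1 ≤ (inner ℂ x ((H₁ + H₂) x) : ℂ).re) :
    Δ - 1 ≤ lam1 ∧ Δ - 2 ≤ lam1 - lam0 :=
  spectral_gap_lower_bound_general H₁ H₂ hpsd η hη Δ hgap hE lam0 lam1 hle φ0 φ1 hφ0 hφ1 horth heig0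
    heig1 hmin0
end

section
/- Let n, c, d be natural numbers with 1 ≤ c ≤ 2^d and d + 1 ≤ n. Define weights w_i for i ∈ {0, 1, …, n−1} by w_i = 2^i if i ≤ d and w_i = 2^{d+1} if i > d. Then the number of subsets S ⊆ {0, 1, …, n−1} with Σ_{i ∈ S} w_i ≤ c − 1 is exactly c. -/
lemma map_attachFin_valEmbedding {n : ℕ} (s : Finset ℕ) (h : ∀ m ∈ s, m < n) :
    (s.attachFin h).map Fin.valEmbedding = s := by
  ext a
  simp only [Finset.mem_map, Finset.mem_attachFin, Fin.valEmbedding_apply]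
  constructor
  · rintro ⟨i, hi, rfl⟩; exact hi
  · intro ha; exact ⟨⟨a, h a ha⟩, ha, rfl⟩

lemma sum_attachFin {n : ℕ} (s : Finset ℕ) (h : ∀ m ∈ s, m < n) (f : ℕ → ℕ) :
    ∑ i ∈ s.attachFin h, f (i : ℕ) = ∑ a ∈ s, f a := by
  conv_rhs => rw [← map_attachFin_valEmbedding s h]
  rw [Finset.sum_map]
  rfl

/-- Counting fact underlying the diagonal Hamiltonian `H^{(z)}`: with weights
`w_i = 2^i` for `i ≤ d` and `w_i = 2^{d+1}` for `i > d`, exactly `c` subsets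
`S ⊆ {0, …, n−1}` have weight sum `≤ c − 1` (where `1 ≤ c ≤ 2^d` and
`d + 1 ≤ n`). -/
theorem count_low_weight_subsets
    (n c d : ℕ) (hc1 : 1 ≤ c) (hc2 : c ≤ 2 ^ d) (hd : d + 1 ≤ n) :
    ((Finset.univ : Finset (Finset (Fin n))).filter
      (fun S : Finset (Fin n) =>
        ∑ i ∈ S, (if (i : ℕ) ≤ d then 2 ^ (i : ℕ) else 2 ^ (d + 1)) ≤ c - 1)).card
      = c := by
  classical
  have hcd : c - 1 < 2 ^ d := lt_of_lt_of_le (Nat.sub_lt hc1 one_pos) hc2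
  -- key: membership in the filter forces all elements < d
  have key : ∀ S : Finset (Fin n),
      (∑ i ∈ S, (if (i : ℕ) ≤ d then 2 ^ (i : ℕ) else 2 ^ (d + 1)) ≤ c - 1) →
      ∀ i ∈ S, (i : ℕ) < d := by
    intro S hS i hi
    by_contra hlt
    push_neg at hlt
    have hw : 2 ^ d ≤ (if (i : ℕ) ≤ d then 2 ^ (i : ℕ) else 2 ^ (d + 1)) := by
      split_ifs with h
      · have : (i : ℕ) = d := le_antisymm h hlt
        simp [this]
      · exact Nat.pow_le_pow_right (by norm_num) (Nat.le_succ d)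
    have : 2 ^ d ≤ c - 1 :=
      le_trans hw (le_trans (Finset.single_le_sum
        (f := fun j : Fin n => if (j : ℕ) ≤ d then 2 ^ (j : ℕ) else 2 ^ (d + 1))
        (fun j _ => Nat.zero_le _) hi) hS)
    omega
  have sum_eq : ∀ S : Finset (Fin n), (∀ i ∈ S, (i : ℕ) < d) →
      (∑ i ∈ S, (if (i : ℕ) ≤ d then 2 ^ (i : ℕ) else 2 ^ (d + 1)))
        = ∑ i ∈ S, 2 ^ (i : ℕ) := by
    intro S hS
    refine Finset.sum_congr rfl fun i hi => ?_
    rw [if_pos (le_of_lt (hS i hi))]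
  have hmain : ((Finset.univ : Finset (Finset (Fin n))).filter
      (fun S : Finset (Fin n) =>
        ∑ i ∈ S, (if (i : ℕ) ≤ d then 2 ^ (i : ℕ) else 2 ^ (d + 1)) ≤ c - 1)).card
      = (Finset.range c).card := by
    refine Finset.card_bij' (fun S _ => ∑ i ∈ S, 2 ^ (i : ℕ))
      (fun m hm => (Nat.bitIndices m).toFinset.attachFin (fun a ha => by
        rw [Finset.mem_range] at hm
        rw [List.mem_toFinset] at ha
        have h2 : 2 ^ a ≤ m := Nat.two_pow_le_of_mem_bitIndices ha
        have h3 : 2 ^ a < 2 ^ d := lt_of_le_of_lt h2 (lt_of_lt_of_le hm hc2)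
        have : a < d := (Nat.pow_lt_pow_iff_right (by norm_num)).mp h3
        omega)) ?_ ?_ ?_ ?_
    · -- f S ∈ range c
      intro S hS
      rw [Finset.mem_filter] at hS
      have hlt := key S hS.2
      rw [Finset.mem_range]
      beta_reduce
      have := sum_eq S hlt
      omega
    · -- g m ∈ filter
      intro m hm
      rw [Finset.mem_range] at hm
      rw [Finset.mem_filter]
      refine ⟨Finset.mem_univ _, ?_⟩
      have hbd : ∀ i : Fin n, (i : ℕ) ∈ (Nat.bitIndices m).toFinset → (i : ℕ) < d := by
        intro i hi
        rw [List.mem_toFinset] at hi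
        have h2 : 2 ^ (i : ℕ) ≤ m := Nat.two_pow_le_of_mem_bitIndices hi
        have : 2 ^ (i : ℕ) < 2 ^ d := lt_of_le_of_lt h2 (lt_of_lt_of_le hm hc2)
        exact (Nat.pow_lt_pow_iff_right (by norm_num)).mp this
      rw [sum_eq _ (fun i hi => hbd i ((Finset.mem_attachFin _).mp hi)),
        sum_attachFin, Finset.twoPowSum_toFinset_bitIndices]
      omega
    · -- left inverse
      intro S hS
      rw [Finset.mem_filter] at hS
      have hlt := key S hS.2
      have hmap : (∑ i ∈ S, 2 ^ (i : ℕ)) = ∑ a ∈ S.map Fin.valEmbedding, 2 ^ a := by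
        rw [Finset.sum_map]; rfl
      beta_reduce
      ext i
      rw [Finset.mem_attachFin, hmap, Finset.toFinset_bitIndices_twoPowSum,
        Finset.mem_map]
      constructor
      · rintro ⟨j, hj, hji⟩
        have : j = i := Fin.ext hji
        rwa [this] at hj
      · intro hiS; exact ⟨i, hiS, rfl⟩
    · -- right inverse
      intro m hm
      beta_reduce
      rw [sum_attachFin, Finset.twoPowSum_toFinset_bitIndices]

  simpa using hmain
end

section
/- Let E be a finite-dimensional complex inner product space, let Q and P be self-adjoint operators on E, let Π be the orthogonal projection onto a subspace 𝒫 of E that is invariant under Q (so ΠQ = QΠ), and suppose ⟨x, Q x⟩ ≥ λ₊‖x‖² for every x ∈ 𝒫, where λ₊ ≥ 0. If ṽ is a unit eigenvector of Q + P with eigenvalue λ̃ satisfying 0 ≤ λ̃ < λ₊, then ‖Π ṽ‖ ≤ ‖P‖/(λ₊ − λ̃); consequently the component of ṽ in the orthogonal complement of 𝒫 satisfies ‖ṽ − Π ṽ‖² ≥ 1 − (‖P‖/(λ₊ − λ̃))². -/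
/-!
Since the projection `Π` commutes with `Q`, it also commutes with `Q - λ̃`, so
`(Q - λ̃) Π ṽ = Π (Q - λ̃) ṽ = -Π P ṽ` has norm at most `‖P‖`. On the other hand `Q - λ̃` is
bounded below by `λ₊ - λ̃` on `𝒫`, which forces `(λ₊ - λ̃) ‖Π ṽ‖ ≤ ‖P‖`. The second bound is
Pythagoras for `ṽ = Π ṽ + (ṽ - Π ṽ)`.
-/

section

open RCLike

variable {𝕜 E : Type*} [RCLike 𝕜] [NormedAddCommGroup E] [InnerProductSpace 𝕜 E]

local notation "⟪" x ", " y "⟫" => inner 𝕜 x y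

theorem mul_norm_le_norm_of_mul_norm_sq_le_re_inner {c : ℝ} {x y : E}
    (h : c * ‖x‖ ^ 2 ≤ re ⟪x, y⟫) : c * ‖x‖ ≤ ‖y‖ := by
  rcases (norm_nonneg x).eq_or_lt with hx | hx
  · simp [← hx]
  · have : c * ‖x‖ * ‖x‖ ≤ ‖y‖ * ‖x‖ := by
      calc c * ‖x‖ * ‖x‖ = c * ‖x‖ ^ 2 := by ring
        _ ≤ re ⟪x, y⟫ := h
        _ ≤ ‖x‖ * ‖y‖ := re_inner_le_norm x y
        _ = ‖y‖ * ‖x‖ := mul_comm _ _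
    exact le_of_mul_le_mul_right this hx

namespace Submodule

variable (K : Submodule 𝕜 E) [K.HasOrthogonalProjection]

theorem sub_mul_norm_starProjection_le_norm_sub_smul {Q : E →L[𝕜] E}
    (hcomm : ∀ x, K.starProjection (Q x) = Q (K.starProjection x)) {c : ℝ}
    (hQ : ∀ x ∈ K, c * ‖x‖ ^ 2 ≤ re ⟪x, Q x⟫) (lam : ℝ) (v : E) :
    (c - lam) * ‖K.starProjection v‖ ≤ ‖Q v - (lam : 𝕜) • v‖ := by
  set w := K.starProjection v
  have hw : w ∈ K := K.starProjection_apply_mem v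
  have hcoercive : (c - lam) * ‖w‖ ^ 2 ≤ re ⟪w, Q w - (lam : 𝕜) • w⟫ := by
    rw [inner_sub_right, inner_smul_right, inner_self_eq_norm_sq_to_K, map_sub,
      ← ofReal_pow, ← ofReal_mul, ofReal_re]
    linarith [hQ w hw]
  calc (c - lam) * ‖w‖ ≤ ‖Q w - (lam : 𝕜) • w‖ :=
        mul_norm_le_norm_of_mul_norm_sq_le_re_inner hcoercive
    _ = ‖K.starProjection (Q v - (lam : 𝕜) • v)‖ := by rw [map_sub, map_smul, hcomm]
    _ ≤ ‖Q v - (lam : 𝕜) • v‖ := K.norm_starProjection_apply_le _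

end Submodule

end

theorem high_energy_component_bound_general
    {E : Type*} [NormedAddCommGroup E] [InnerProductSpace ℂ E] [FiniteDimensional ℂ E]
    (Q P : E →L[ℂ] E)
    (K : Submodule ℂ E)
    (hinv : ∀ x : E, ((K.orthogonalProjectionOnto (Q x)) : E) = Q ((K.orthogonalProjectionOnto x) : E))
    (lamPlus : ℝ)
    (hQlow : ∀ x ∈ K, lamPlus * ‖x‖ ^ 2 ≤ (inner ℂ x (Q x) : ℂ).re)
    (v : E) (hv : ‖v‖ = 1) (lam : ℝ) (hlam : lam < lamPlus)
    (heig : (Q + P) v = (lam : ℂ) • v) :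
    ‖((K.orthogonalProjectionOnto v) : E)‖ ≤ ‖P‖ / (lamPlus - lam) ∧
      1 - (‖P‖ / (lamPlus - lam)) ^ 2 ≤ ‖v - ((K.orthogonalProjectionOnto v) : E)‖ ^ 2 := by
  simp only [← K.starProjection_apply] at hinv ⊢
  have hshift : Q v - (lam : ℂ) • v = -P v := by
    rw [← heig, add_apply]
    abel
  have hproj : ‖K.starProjection v‖ ≤ ‖P‖ / (lamPlus - lam) := by
    rw [le_div_iff₀' (sub_pos.2 hlam)]
    calc (lamPlus - lam) * ‖K.starProjection v‖ ≤ ‖Q v - (lam : ℂ) • v‖ :=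
          K.sub_mul_norm_starProjection_le_norm_sub_smul hinv hQlow lam v
      _ = ‖P v‖ := by rw [hshift, norm_neg]
      _ ≤ ‖P‖ := by simpa [hv] using P.le_opNorm v
  have hpythagoras := K.norm_sq_eq_add_norm_sq_starProjection v
  rw [hv, K.starProjection_orthogonal_val] at hpythagoras
  have hsq := pow_le_pow_left₀ (norm_nonneg _) hproj 2
  exact ⟨hproj, by linarith⟩

/-- A low-energy eigenvector of the perturbed Hamiltonian `Q + P` has small
component in the high-energy invariant subspace `K` of `Q`: if `(Q + P)ṽ = λ̃ ṽ`
with `0 ≤ λ̃ < λ₊` and `⟨x, Q x⟩ ≥ λ₊‖x‖²` on `K`, then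
`‖Π ṽ‖ ≤ ‖P‖/(λ₊ − λ̃)` and `‖ṽ − Π ṽ‖² ≥ 1 − (‖P‖/(λ₊ − λ̃))²`. -/
theorem high_energy_component_bound
    {E : Type*} [NormedAddCommGroup E] [InnerProductSpace ℂ E] [FiniteDimensional ℂ E]
    (Q P : E →L[ℂ] E) (hQ : IsSelfAdjoint Q) (hP : IsSelfAdjoint P)
    (K : Submodule ℂ E)
    (hinv : ∀ x : E, ((K.orthogonalProjectionOnto (Q x)) : E) = Q ((K.orthogonalProjectionOnto x) : E))
    (lamPlus : ℝ) (hlamPlus : 0 ≤ lamPlus)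
    (hQlow : ∀ x ∈ K, lamPlus * ‖x‖ ^ 2 ≤ (inner ℂ x (Q x) : ℂ).re)
    (v : E) (hv : ‖v‖ = 1) (lam : ℝ) (hlam0 : 0 ≤ lam) (hlam : lam < lamPlus)
    (heig : (Q + P) v = (lam : ℂ) • v) :
    ‖((K.orthogonalProjectionOnto v) : E)‖ ≤ ‖P‖ / (lamPlus - lam) ∧
      1 - (‖P‖ / (lamPlus - lam)) ^ 2 ≤ ‖v - ((K.orthogonalProjectionOnto v) : E)‖ ^ 2 :=
  high_energy_component_bound_general Q P K hinv lamPlus hQlow v hv lam hlam heig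
end

section
/- Let E be a finite-dimensional complex inner product space, let A be a self-adjoint operator on E, let v be a unit eigenvector of A with eigenvalue λ, and let γ > 0 be such that ⟨x, A x⟩ ≥ (λ + γ)‖x‖² for every vector x orthogonal to v. If w is a unit vector with ⟨w, A w⟩ ≤ λ + 2δ for some δ ≥ 0, then |⟨w, v⟩|² ≥ 1 − 2δ/γ. -/
/-!
Write `w = c • v + x` with `c = ⟪v, w⟫` and `x ⟂ v`. Since `v` is an eigenvector of the
self-adjoint `A`, the cross terms vanish and `⟪w, A w⟫ = |c|² λ + ⟪x, A x⟫ ≥ λ + γ ‖x‖²`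
(using `|c|² + ‖x‖² = 1`). Hence `‖x‖² ≤ 2δ/γ`, i.e. `|c|² ≥ 1 - 2δ/γ`.
-/

open scoped InnerProductSpace

section

variable {𝕜 E : Type*} [RCLike 𝕜] [NormedAddCommGroup E] [InnerProductSpace 𝕜 E]

theorem inner_sub_smul_inner_self_right_eq_zero {v : E} (hv : ‖v‖ = 1) (w : E) :
    ⟪v, w - ⟪v, w⟫_𝕜 • v⟫_𝕜 = 0 := by
  rw [inner_sub_right, inner_smul_right, inner_self_eq_one_of_norm_eq_one hv, mul_one, sub_self]

theorem norm_sq_eq_norm_inner_sq_add_norm_sub_smul_inner_sq {v : E} (hv : ‖v‖ = 1) (w : E) :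
    ‖w‖ ^ 2 = ‖⟪v, w⟫_𝕜‖ ^ 2 + ‖w - ⟪v, w⟫_𝕜 • v‖ ^ 2 := by
  have horth : ⟪⟪v, w⟫_𝕜 • v, w - ⟪v, w⟫_𝕜 • v⟫_𝕜 = 0 := by
    rw [inner_smul_left, inner_sub_smul_inner_self_right_eq_zero hv, mul_zero]
  have := norm_add_sq_eq_norm_sq_add_norm_sq_of_inner_eq_zero _ _ horth
  rw [add_sub_cancel, norm_smul, hv] at this
  linear_combination this

theorem LinearMap.IsSymmetric.inner_map_add_self_of_eigenvector {T : E →ₗ[𝕜] E}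
    (hT : T.IsSymmetric) {u x : E} {μ : 𝕜} (hTu : T u = μ • u) (hux : ⟪u, x⟫_𝕜 = 0) :
    ⟪u + x, T (u + x)⟫_𝕜 = ⟪u, T u⟫_𝕜 + ⟪x, T x⟫_𝕜 := by
  have hxu : ⟪x, u⟫_𝕜 = 0 := by rw [← inner_conj_symm, hux, map_zero]
  have hux' : ⟪u, T x⟫_𝕜 = 0 := by rw [← hT, hTu, inner_smul_left, hux, mul_zero]
  have hxu' : ⟪x, T u⟫_𝕜 = 0 := by rw [hTu, inner_smul_right, hxu, mul_zero]
  rw [map_add, inner_add_left, inner_add_right, inner_add_right, hux', hxu']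
  ring

theorem LinearMap.IsSymmetric.re_inner_map_self_eq_of_unit_eigenvector {T : E →ₗ[𝕜] E}
    (hT : T.IsSymmetric) {v : E} (hv : ‖v‖ = 1) {μ : ℝ} (hTv : T v = (μ : 𝕜) • v) (w : E) :
    RCLike.re ⟪w, T w⟫_𝕜 =
      ‖⟪v, w⟫_𝕜‖ ^ 2 * μ + RCLike.re ⟪w - ⟪v, w⟫_𝕜 • v, T (w - ⟪v, w⟫_𝕜 • v)⟫_𝕜 := by
  set c := ⟪v, w⟫_𝕜
  have hcv : T (c • v) = (μ : 𝕜) • c • v := by rw [map_smul, hTv, smul_comm]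
  have horth : ⟪c • v, w - c • v⟫_𝕜 = 0 := by
    rw [inner_smul_left, inner_sub_smul_inner_self_right_eq_zero hv, mul_zero]
  have hdiag : ⟪c • v, T (c • v)⟫_𝕜 = ((‖c‖ ^ 2 * μ : ℝ) : 𝕜) := by
    rw [hcv, smul_smul, inner_smul_left, inner_smul_right, inner_self_eq_one_of_norm_eq_one hv,
      mul_one, mul_left_comm, RCLike.conj_mul]
    push_cast
    ring
  conv_lhs => rw [← add_sub_cancel (c • v) w]
  rw [hT.inner_map_add_self_of_eigenvector hcv horth, map_add, hdiag, RCLike.ofReal_re]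

end

theorem rayleigh_quotient_fidelity_general
    {E : Type*} [NormedAddCommGroup E] [InnerProductSpace ℂ E] [FiniteDimensional ℂ E]
    (A : E →L[ℂ] E) (hA : IsSelfAdjoint A)
    (v : E) (hv : ‖v‖ = 1) (lam : ℝ) (heig : A v = (lam : ℂ) • v)
    (γ : ℝ) (hγ : 0 < γ)
    (hgap : ∀ x : E, (inner ℂ v x : ℂ) = 0 → (lam + γ) * ‖x‖ ^ 2 ≤ (inner ℂ x (A x) : ℂ).re)
    (w : E) (hw : ‖w‖ = 1) (δ : ℝ)
    (hray : (inner ℂ w (A w) : ℂ).re ≤ lam + 2 * δ) :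
    1 - 2 * δ / γ ≤ ‖(inner ℂ w v : ℂ)‖ ^ 2 := by
  set x : E := w - ⟪v, w⟫_ℂ • v
  have hsym : (A : E →ₗ[ℂ] E).IsSymmetric :=
    ContinuousLinearMap.isSelfAdjoint_iff_isSymmetric.mp hA
  have hsplit : (⟪w, A w⟫_ℂ).re = ‖⟪v, w⟫_ℂ‖ ^ 2 * lam + (⟪x, A x⟫_ℂ).re :=
    hsym.re_inner_map_self_eq_of_unit_eigenvector hv heig w
  have hnorm : 1 = ‖⟪v, w⟫_ℂ‖ ^ 2 + ‖x‖ ^ 2 := by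
    rw [← norm_sq_eq_norm_inner_sq_add_norm_sub_smul_inner_sq hv w, hw, one_pow]
  have hx_small : ‖x‖ ^ 2 ≤ 2 * δ / γ := by
    rw [le_div_iff₀ hγ]
    linear_combination hray + hgap x (inner_sub_smul_inner_self_right_eq_zero hv w) - hsplit +
      lam * hnorm
  rw [norm_inner_symm]
  linarith

/-- If `v` is a unit eigenvector of the self-adjoint operator `A` with eigenvalue
`λ`, the Rayleigh quotient of `A` is at least `λ + γ` on the orthogonal
complement of `v`, and `w` is a unit vector with `⟨w, A w⟩ ≤ λ + 2δ`, then
`|⟨w, v⟩|² ≥ 1 − 2δ/γ`. -/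
theorem rayleigh_quotient_fidelity
    {E : Type*} [NormedAddCommGroup E] [InnerProductSpace ℂ E] [FiniteDimensional ℂ E]
    (A : E →L[ℂ] E) (hA : IsSelfAdjoint A)
    (v : E) (hv : ‖v‖ = 1) (lam : ℝ) (heig : A v = (lam : ℂ) • v)
    (γ : ℝ) (hγ : 0 < γ)
    (hgap : ∀ x : E, (inner ℂ v x : ℂ) = 0 → (lam + γ) * ‖x‖ ^ 2 ≤ (inner ℂ x (A x) : ℂ).re)
    (w : E) (hw : ‖w‖ = 1) (δ : ℝ) (hδ : 0 ≤ δ)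
    (hray : (inner ℂ w (A w) : ℂ).re ≤ lam + 2 * δ) :
    1 - 2 * δ / γ ≤ ‖(inner ℂ w v : ℂ)‖ ^ 2 :=
  rayleigh_quotient_fidelity_general A hA v hv lam heig γ hγ hgap w hw δ hray
end

section
/- Let d ≥ 1 and T ≥ 1, and let U₁, …, U_T be d × d unitary complex matrices. For t ∈ {1, …, T}, define the d(T+1) × d(T+1) complex matrix H_t = (1/2)·I_d ⊗ (E_{t,t} + E_{t−1,t−1}) − (1/2)·U_t ⊗ E_{t,t−1} − (1/2)·U_t† ⊗ E_{t−1,t}, where E_{s,s'} denotes the (T+1) × (T+1) matrix with a single 1 in position (s, s'), and set H_prop = Σ_{t=1}^{T} H_t. Then H_prop is positive semi-definite, and a vector ψ, viewed as a function from {0,…,d−1} × {0,…,T} to ℂ, satisfies H_prop ψ = 0 if and only if there exists a vector φ ∈ ℂ^d such that for every t ∈ {0,…,T}, the column ψ(·, t) equals (U_t U_{t−1} ⋯ U₁) φ (with the empty product for t = 0 being the identity). In particular, the kernel of H_prop has dimension d. -/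
/-!
With `A_t = I ⊗ E_{t,t} − U_t ⊗ E_{t,t−1}`, unitarity of `U_t` gives `H_t = ½ A_tᴴ A_t`, so
`H_prop = ½ Σ_t A_tᴴ A_t` is positive semi-definite and `H_prop ψ = 0` iff `A_t ψ = 0` for
every `t`, i.e. iff `ψ(·, t) = U_t ψ(·, t−1)` for all `t`. Unrolling this recursion, the null
space is the image of the injective history map `φ ↦ (t ↦ U_t ⋯ U₁ φ)`, hence has dimension `d`.
-/

open Matrix
open scoped Kronecker ComplexOrder

/-- The Feynman–Kitaev propagation Hamiltonian of the circuit `U_T ⋯ U₁` with an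
explicit `(T+1)`-dimensional clock register:
`H_prop = Σ_t [(1/2)·I ⊗ (E_{t,t} + E_{t−1,t−1}) − (1/2)·U_t ⊗ E_{t,t−1} − (1/2)·U_t† ⊗ E_{t−1,t}]`. -/
noncomputable def Hprop (d T : ℕ) (U : Fin T → Matrix (Fin d) (Fin d) ℂ) :
    Matrix (Fin d × Fin (T + 1)) (Fin d × Fin (T + 1)) ℂ :=
  ∑ t : Fin T,
    ((1 / 2 : ℂ) • ((1 : Matrix (Fin d) (Fin d) ℂ) ⊗ₖ
        (single t.succ t.succ (1 : ℂ) + single t.castSucc t.castSucc (1 : ℂ)))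
      - (1 / 2 : ℂ) • (U t ⊗ₖ single t.succ t.castSucc (1 : ℂ))
      - (1 / 2 : ℂ) • ((U t)ᴴ ⊗ₖ single t.castSucc t.succ (1 : ℂ)))

/-- The ordered product `U_k ⋯ U₁` of the first `k` gates (the empty product for
`k = 0` being the identity). -/
noncomputable def prodUpTo {d T : ℕ} (U : Fin T → Matrix (Fin d) (Fin d) ℂ) :
    ℕ → Matrix (Fin d) (Fin d) ℂ
  | 0 => 1
  | k + 1 => (if h : k < T then U ⟨k, h⟩ else 1) * prodUpTo U k

namespace Matrix

theorem PosSemidef.sum_mulVec_eq_zero_iff {n 𝕜 κ : Type*} [Fintype n] [RCLike 𝕜]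
    (s : Finset κ) {M : κ → Matrix n n 𝕜} (hM : ∀ k ∈ s, (M k).PosSemidef) (x : n → 𝕜) :
    (∑ k ∈ s, M k) *ᵥ x = 0 ↔ ∀ k ∈ s, M k *ᵥ x = 0 := by
  have hnonneg : ∀ k ∈ s, 0 ≤ star x ⬝ᵥ M k *ᵥ x := fun k hk =>
    (hM k hk).dotProduct_mulVec_nonneg x
  rw [← (posSemidef_sum s hM).dotProduct_mulVec_zero_iff, sum_mulVec, dotProduct_sum,
    Finset.sum_eq_zero_iff_of_nonneg hnonneg]
  exact forall₂_congr fun k hk => (hM k hk).dotProduct_mulVec_zero_iff x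

variable {n ι R : Type*} [Fintype n] [DecidableEq n] [Fintype ι] [DecidableEq ι]

def transitionOp [Ring R] (V : Matrix n n R) (i j : ι) : Matrix (n × ι) (n × ι) R :=
  1 ⊗ₖ single i i 1 - V ⊗ₖ single i j 1

theorem transitionOp_mulVec_apply [Ring R] (V : Matrix n n R) (i j : ι) (ψ : n × ι → R)
    (k : n) (s : ι) :
    (transitionOp V i j *ᵥ ψ) (k, s) =
      if i = s then ψ (k, i) - (V *ᵥ fun k => ψ (k, j)) k else 0 := by
  by_cases hs : i = s
  · subst hs
    simp [transitionOp, mulVec, dotProduct, Fintype.sum_prod_type, single_apply, one_apply,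
      sub_mul, ite_mul, Finset.sum_sub_distrib]
  · simp [transitionOp, mulVec, dotProduct, hs]

theorem transitionOp_mulVec_eq_zero_iff [Ring R] (V : Matrix n n R) (i j : ι)
    (ψ : n × ι → R) :
    transitionOp V i j *ᵥ ψ = 0 ↔ (fun k => ψ (k, i)) = V *ᵥ fun k => ψ (k, j) := by
  simp only [funext_iff, Prod.forall, transitionOp_mulVec_apply, Pi.zero_apply]
  constructor
  · intro h k
    simpa [sub_eq_zero] using h k i
  · intro h k s
    split_ifs
    · rw [h k, sub_self]
    · rfl

theorem conjTranspose_transitionOp_mul_self [CommRing R] [StarRing R] {V : Matrix n n R}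
    (hV : Vᴴ * V = 1) (i j : ι) :
    (transitionOp V i j)ᴴ * transitionOp V i j =
      1 ⊗ₖ (single i i 1 + single j j 1) - V ⊗ₖ single i j 1 - Vᴴ ⊗ₖ single j i 1 := by
  simp only [transitionOp, conjTranspose_sub, conjTranspose_kronecker, conjTranspose_single,
    conjTranspose_one, star_one, sub_mul, mul_sub, ← mul_kronecker_mul, single_mul_single_same,
    one_mul, mul_one, hV, kronecker_add]
  abel

end Matrix

open Matrix

section

variable {d T : ℕ} (U : Fin T → Matrix (Fin d) (Fin d) ℂ)

theorem Hprop_eq_smul_sum_conjTranspose_mul_self (hU : ∀ t, (U t)ᴴ * U t = 1) :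
    Hprop d T U = (1 / 2 : ℂ) • ∑ t,
      (transitionOp (U t) t.succ t.castSucc)ᴴ * transitionOp (U t) t.succ t.castSucc := by
  rw [Finset.smul_sum]
  refine Finset.sum_congr rfl fun t _ => ?_
  rw [conjTranspose_transitionOp_mul_self (hU t), smul_sub, smul_sub]

theorem Hprop_posSemidef (hU : ∀ t, (U t)ᴴ * U t = 1) : (Hprop d T U).PosSemidef := by
  rw [Hprop_eq_smul_sum_conjTranspose_mul_self U hU]
  exact (posSemidef_sum _ fun t _ => posSemidef_conjTranspose_mul_self _).smul
    (by norm_num [Complex.le_def])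

theorem Hprop_mulVec_eq_zero_iff (hU : ∀ t, (U t)ᴴ * U t = 1) (ψ : Fin d × Fin (T + 1) → ℂ) :
    Hprop d T U *ᵥ ψ = 0 ↔
      ∀ t : Fin T, (fun i => ψ (i, t.succ)) = U t *ᵥ fun i => ψ (i, t.castSucc) := by
  rw [Hprop_eq_smul_sum_conjTranspose_mul_self U hU, smul_mulVec, smul_eq_zero,
    or_iff_right (by norm_num), PosSemidef.sum_mulVec_eq_zero_iff _
      (fun t _ => posSemidef_conjTranspose_mul_self _)]
  simp only [Finset.mem_univ, true_imp_iff, conjTranspose_mul_self_mulVec_eq_zero,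
    transitionOp_mulVec_eq_zero_iff]

theorem prodUpTo_succ (t : Fin T) : prodUpTo U (t + 1) = U t * prodUpTo U t := by
  simp [prodUpTo]

theorem forall_succ_eq_mulVec_iff_exists_prodUpTo (v : Fin (T + 1) → Fin d → ℂ) :
    (∀ t : Fin T, v t.succ = U t *ᵥ v t.castSucc) ↔
      ∃ φ, ∀ t : Fin (T + 1), v t = prodUpTo U t *ᵥ φ := by
  constructor
  · intro h
    refine ⟨v 0, Fin.induction (by simp [prodUpTo]) fun t ih => ?_⟩
    rw [h t, ih, Fin.val_succ, Fin.val_castSucc, prodUpTo_succ, mulVec_mulVec]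
  · rintro ⟨φ, hφ⟩ t
    rw [hφ, hφ, Fin.val_succ, Fin.val_castSucc, prodUpTo_succ, mulVec_mulVec]

noncomputable def historyMap : (Fin d → ℂ) →ₗ[ℂ] Fin d × Fin (T + 1) → ℂ :=
  (of fun p : Fin d × Fin (T + 1) => prodUpTo U p.2 p.1).mulVecLin

theorem historyMap_apply (φ : Fin d → ℂ) (i : Fin d) (t : Fin (T + 1)) :
    historyMap U φ (i, t) = (prodUpTo U t *ᵥ φ) i :=
  rfl

theorem mem_range_historyMap_iff (ψ : Fin d × Fin (T + 1) → ℂ) :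
    ψ ∈ LinearMap.range (historyMap U) ↔
      ∃ φ, ∀ t : Fin (T + 1), (fun i => ψ (i, t)) = prodUpTo U t *ᵥ φ := by
  simp only [LinearMap.mem_range, funext_iff, Prod.forall, historyMap_apply]
  exact exists_congr fun φ => ⟨fun h t i => (h i t).symm, fun h i t => (h t i).symm⟩

theorem historyMap_injective : Function.Injective (historyMap U) := by
  intro φ φ' h
  funext i
  simpa [historyMap_apply, prodUpTo] using congrFun h (i, 0)

end

theorem Hprop_kernel_general
    (d T : ℕ)
    (U : Fin T → Matrix (Fin d) (Fin d) ℂ)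
    (hU : ∀ t, U t ∈ Matrix.unitaryGroup (Fin d) ℂ) :
    (Hprop d T U).PosSemidef ∧
    (∀ ψ : Fin d × Fin (T + 1) → ℂ,
      (Hprop d T U).mulVec ψ = 0 ↔
        ∃ φ : Fin d → ℂ, ∀ t : Fin (T + 1),
          (fun i => ψ (i, t)) = (prodUpTo U (t : ℕ)).mulVec φ) ∧
    Module.finrank ℂ (LinearMap.ker (Hprop d T U).mulVecLin) = d := by
  have hU' : ∀ t, (U t)ᴴ * U t = 1 := fun t => mem_unitaryGroup_iff'.mp (hU t)
  have hker : ∀ ψ : Fin d × Fin (T + 1) → ℂ, (Hprop d T U).mulVec ψ = 0 ↔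
      ∃ φ : Fin d → ℂ, ∀ t : Fin (T + 1), (fun i => ψ (i, t)) = (prodUpTo U (t : ℕ)).mulVec φ :=
    fun ψ => (Hprop_mulVec_eq_zero_iff U hU' ψ).trans
      (forall_succ_eq_mulVec_iff_exists_prodUpTo U fun t i => ψ (i, t))
  have hker_eq_range : LinearMap.ker (Hprop d T U).mulVecLin = LinearMap.range (historyMap U) := by
    ext ψ
    rw [LinearMap.mem_ker, mulVecLin_apply, hker, mem_range_historyMap_iff]
  refine ⟨Hprop_posSemidef U hU', hker, ?_⟩
  rw [hker_eq_range, LinearMap.finrank_range_of_inj (historyMap_injective U),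
    Module.finrank_fin_fun]

/-- `H_prop` is positive semi-definite, its null space consists exactly of the
history states (i.e. `ψ(·, t) = U_t ⋯ U₁ φ` for some `φ ∈ ℂ^d`), and in
particular its kernel has dimension `d`. -/
theorem Hprop_kernel
    (d T : ℕ) (hd : 1 ≤ d) (hT : 1 ≤ T)
    (U : Fin T → Matrix (Fin d) (Fin d) ℂ)
    (hU : ∀ t, U t ∈ Matrix.unitaryGroup (Fin d) ℂ) :
    (Hprop d T U).PosSemidef ∧
    (∀ ψ : Fin d × Fin (T + 1) → ℂ,
      (Hprop d T U).mulVec ψ = 0 ↔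
        ∃ φ : Fin d → ℂ, ∀ t : Fin (T + 1),
          (fun i => ψ (i, t)) = (prodUpTo U (t : ℕ)).mulVec φ) ∧
    Module.finrank ℂ (LinearMap.ker (Hprop d T U).mulVecLin) = d :=
  Hprop_kernel_general d T U hU
end
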